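/- Let λ, μ : ℕ → ℝ with μ(n) ≠ 0 for all n ≥ 2 and λ(n)/μ(n) → 0 as n → ∞. Set f(n) = λ(n) + μ(n) and g(n) = −λ(n−1)μ(n), and let a : ℕ → ℝ satisfy a_{n+1} = f(n)a_n + g(n)a_{n−1} for all n ≥ 2, with b₁ := a₂ − λ(1)a₁ ≠ 0. Define r(n) = b₁·∏_{i=2}^{n} μ(i). Then the sequence (log₁₀ |a_n|) is equidistributed mod 1 if and only if the sequence (log₁₀ |r(n)|) is equidistributed mod 1; that is, (a_n) is Benford base 10 if and only if the main term (r(n)) is Benford base 10. -/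

import Mathlib

/-!
With `b n = a (n + 1) - λ n * a n`, the recurrence reads `b (n + 1) = μ (n + 1) * b n`,
so `b n = r n` and `a (n + 1) = (1 + c n) * r n` with `c n = λ n * a n / r n`. The error
terms satisfy `c (n + 1) = (λ (n + 1) / μ (n + 1)) * (1 + c n)`; since `λ / μ → 0` they stay
bounded and hence tend to `0`. Thus `log₁₀ |a (n + 1)| - log₁₀ |r n| → 0`, and equidistribution
mod 1 is insensitive both to an index shift and to perturbations tending to `0`.
-/

open Filter Finset Classical

/-- A sequence `x : ℕ → ℝ` is equidistributed mod 1 if for all `0 ≤ u ≤ v ≤ 1`,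
the proportion of `n < N` with `Int.fract (x n) ∈ [u, v)` tends to `v - u`. -/
def EquidistributedMod1 (x : ℕ → ℝ) : Prop :=
  ∀ u v : ℝ, 0 ≤ u → u ≤ v → v ≤ 1 →
    Tendsto (fun N : ℕ =>
        (((Finset.range N).filter (fun n => Int.fract (x n) ∈ Set.Ico u v)).card : ℝ) / (N : ℝ))
      atTop (nhds (v - u))

open Topology

noncomputable def fractCount (x : ℕ → ℝ) (u v : ℝ) (N : ℕ) : ℕ :=
  ((range N).filter (fun n => Int.fract (x n) ∈ Set.Ico u v)).card

theorem equidistributedMod1_iff_fractCount {x : ℕ → ℝ} :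
    EquidistributedMod1 x ↔ ∀ u v : ℝ, 0 ≤ u → u ≤ v → v ≤ 1 →
      Tendsto (fun N : ℕ => (fractCount x u v N : ℝ) / N) atTop (𝓝 (v - u)) :=
  Iff.rfl

theorem fractCount_add {x : ℕ → ℝ} {u v w : ℝ} (huv : u ≤ v) (hvw : v ≤ w) (N : ℕ) :
    fractCount x u v N + fractCount x v w N = fractCount x u w N := by
  rw [fractCount, fractCount, fractCount, ← card_union_of_disjoint, ← filter_or]
  · refine congrArg card (filter_congr fun n _ => ?_)
    rw [← Set.mem_union, Set.Ico_union_Ico_eq_Ico huv hvw]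
  · refine disjoint_filter.2 fun n _ h₁ h₂ => ?_
    exact Set.disjoint_left.1 (Set.Ico_disjoint_Ico.2 (by simp)) h₁ h₂

theorem fractCount_zero_one (x : ℕ → ℝ) (N : ℕ) : fractCount x 0 1 N = N := by
  simp [fractCount, Int.fract_nonneg, Int.fract_lt_one]

theorem fractCount_succ (x : ℕ → ℝ) (u v : ℝ) (N : ℕ) :
    fractCount x u v (N + 1) =
      fractCount x u v N + if Int.fract (x N) ∈ Set.Ico u v then 1 else 0 := by
  simp only [fractCount, card_filter, sum_range_succ]

theorem fractCount_comp_succ_add (x : ℕ → ℝ) (u v : ℝ) (N : ℕ) :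
    fractCount (fun n => x (n + 1)) u v N + (if Int.fract (x 0) ∈ Set.Ico u v then 1 else 0) =
      fractCount x u v (N + 1) := by
  simp only [fractCount, card_filter, sum_range_succ']

theorem abs_fractCount_comp_succ_sub_le (x : ℕ → ℝ) (u v : ℝ) (N : ℕ) :
    |(fractCount (fun n => x (n + 1)) u v N : ℝ) - fractCount x u v N| ≤ 1 := by
  have h₁ := congrArg (Nat.cast : ℕ → ℝ) (fractCount_succ x u v N)
  have h₂ := congrArg (Nat.cast : ℕ → ℝ) (fractCount_comp_succ_add x u v N)
  push_cast at h₁ h₂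
  rw [abs_sub_le_iff]
  split_ifs at h₁ h₂ <;> constructor <;> linarith

theorem Filter.Tendsto.div_natCast_of_abs_sub_le {c d : ℕ → ℝ} {C L : ℝ}
    (hcd : ∀ N, |c N - d N| ≤ C) (h : Tendsto (fun N : ℕ => c N / N) atTop (𝓝 L)) :
    Tendsto (fun N : ℕ => d N / N) atTop (𝓝 L) := by
  have h₀ : Tendsto (fun N : ℕ => (d N - c N) / N) atTop (𝓝 0) := by
    refine squeeze_zero_norm (fun N => ?_) (tendsto_const_div_atTop_nhds_zero_nat C)
    rw [Real.norm_eq_abs, abs_div, Nat.abs_cast, abs_sub_comm]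
    exact div_le_div_of_nonneg_right (hcd N) (Nat.cast_nonneg N)
  simpa [sub_div] using h.add h₀

theorem equidistributedMod1_comp_succ_iff {x : ℕ → ℝ} :
    EquidistributedMod1 (fun n => x (n + 1)) ↔ EquidistributedMod1 x := by
  simp only [equidistributedMod1_iff_fractCount]
  refine ⟨fun h u v hu huv hv => ?_, fun h u v hu huv hv => ?_⟩
  · exact (h u v hu huv hv).div_natCast_of_abs_sub_le (C := 1)
      (c := fun N => fractCount _ u v N) (abs_fractCount_comp_succ_sub_le x u v)
  · refine (h u v hu huv hv).div_natCast_of_abs_sub_le (C := 1)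
      (c := fun N => fractCount x u v N) fun N => ?_
    rw [abs_sub_comm]
    exact abs_fractCount_comp_succ_sub_le x u v N

/-- Lower bounds suffice: the upper bound on `[u, v)` follows from the lower bounds on the
complementary intervals `[0, u)` and `[v, 1)`. -/
theorem equidistributedMod1_of_forall_eventually_le {x : ℕ → ℝ}
    (h : ∀ u v : ℝ, 0 ≤ u → u ≤ v → v ≤ 1 → ∀ ε > 0,
      ∀ᶠ N : ℕ in atTop, v - u - ε ≤ (fractCount x u v N : ℝ) / N) :
    EquidistributedMod1 x := by
  refine equidistributedMod1_iff_fractCount.2 fun u v hu huv hv => ?_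
  rw [tendsto_order]
  refine ⟨fun b hb => ?_, fun b hb => ?_⟩
  · filter_upwards [h u v hu huv hv _ (half_pos (sub_pos.2 hb))] with N hN
    linarith
  · have hε : 0 < (b - (v - u)) / 3 := by linarith
    filter_upwards [h 0 u le_rfl hu (huv.trans hv) _ hε, h v 1 (hu.trans huv) hv le_rfl _ hε,
      eventually_gt_atTop 0] with N h₁ h₂ hN
    have hsum : (fractCount x 0 u N : ℝ) / N + fractCount x u v N / N
        + fractCount x v 1 N / N = 1 := by
      rw [← add_div, ← add_div]
      norm_cast
      rw [fractCount_add hu huv, fractCount_add (hu.trans huv) hv, fractCount_zero_one]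
      exact div_self (by positivity)
    linarith

/-- Shrinking the interval by `δ` rules out wrap-around: `fract y + (x - y)` stays in `[0, 1)`. -/
theorem fract_mem_Ico_of_abs_sub_lt {x y u v δ : ℝ} (hu : 0 ≤ u) (hv : v ≤ 1)
    (hxy : |x - y| < δ) (hy : Int.fract y ∈ Set.Ico (u + δ) (v - δ)) :
    Int.fract x ∈ Set.Ico u v := by
  obtain ⟨h₁, h₂⟩ := abs_lt.1 hxy
  have hfract : Int.fract x = Int.fract y + (x - y) := by
    refine Int.fract_eq_iff.2 ⟨by linarith [hy.1], by linarith [hy.2], ⌊y⌋, ?_⟩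
    rw [← Int.self_sub_fract]
    ring
  rw [hfract]
  exact ⟨by linarith [hy.1], by linarith [hy.2]⟩

theorem fractCount_le_add_fractCount {x y : ℕ → ℝ} {u v δ : ℝ} {N₀ : ℕ} (hu : 0 ≤ u)
    (hv : v ≤ 1) (hxy : ∀ n ≥ N₀, |x n - y n| < δ) (N : ℕ) :
    fractCount y (u + δ) (v - δ) N ≤ N₀ + fractCount x u v N := by
  calc fractCount y (u + δ) (v - δ) N
      ≤ (range N₀ ∪ (range N).filter (fun n => Int.fract (x n) ∈ Set.Ico u v) : Finset ℕ).card := by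
        refine card_le_card fun n hn => ?_
        rw [mem_filter] at hn
        rw [mem_union, mem_range, mem_filter]
        by_cases hn₀ : n < N₀
        · exact .inl hn₀
        · exact .inr ⟨hn.1, fract_mem_Ico_of_abs_sub_lt hu hv (hxy n (not_lt.1 hn₀)) hn.2⟩
    _ ≤ N₀ + fractCount x u v N := by
        simpa only [card_range, fractCount] using card_union_le (range N₀) _

theorem EquidistributedMod1.of_tendsto_sub {x y : ℕ → ℝ} (hy : EquidistributedMod1 y)
    (hxy : Tendsto (fun n => x n - y n) atTop (𝓝 0)) : EquidistributedMod1 x := by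
  refine equidistributedMod1_of_forall_eventually_le fun u v hu huv hv ε hε => ?_
  rcases le_or_gt (v - u) ε with hsmall | hlarge
  · refine Eventually.of_forall fun N => ?_
    have : (0 : ℝ) ≤ fractCount x u v N / N := by positivity
    linarith
  set δ := ε / 4 with hδ
  obtain ⟨N₀, hN₀⟩ : ∃ N₀, ∀ n ≥ N₀, |x n - y n| < δ := by
    simpa [Real.dist_eq] using Metric.tendsto_atTop.1 hxy δ (by positivity)
  have hy' := equidistributedMod1_iff_fractCount.1 hy (u + δ) (v - δ)
    (by linarith) (by linarith) (by linarith)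
  filter_upwards [hy'.eventually (lt_mem_nhds (sub_lt_self _ (by positivity : 0 < δ))),
    (tendsto_const_div_atTop_nhds_zero_nat (N₀ : ℝ)).eventually (gt_mem_nhds
      (by positivity : 0 < δ))] with N h₁ h₂
  have hcount :
      (fractCount y (u + δ) (v - δ) N : ℝ) / N ≤ N₀ / N + fractCount x u v N / N := by
    rw [← add_div]
    gcongr
    exact_mod_cast fractCount_le_add_fractCount hu hv hN₀ N
  linarith

theorem tendsto_logb_abs_sub_logb_abs {x y : ℕ → ℝ} (b : ℝ)
    (h : Tendsto (fun n => x n / y n) atTop (𝓝 1)) :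
    Tendsto (fun n => Real.logb b |x n| - Real.logb b |y n|) atTop (𝓝 0) := by
  have hlim : Tendsto (fun n => Real.logb b |x n / y n|) atTop (𝓝 0) := by
    have habs : Tendsto (fun n => |x n / y n|) atTop (𝓝 1) := by simpa using h.abs
    simpa [Function.comp_def] using
      (Real.continuousAt_logb (b := b) one_ne_zero).tendsto.comp habs
  refine hlim.congr' ?_
  filter_upwards [h.eventually_ne one_ne_zero] with n hn
  have hx : x n ≠ 0 := by rintro hx; simp [hx] at hn
  have hy : y n ≠ 0 := by rintro hy; simp [hy] at hn
  rw [abs_div, Real.logb_div (abs_ne_zero.2 hx) (abs_ne_zero.2 hy)]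

theorem equidistributedMod1_logb_abs_iff_of_tendsto_div {a r : ℕ → ℝ} (b : ℝ)
    (h : Tendsto (fun n => a (n + 1) / r n) atTop (𝓝 1)) :
    EquidistributedMod1 (fun n => Real.logb b |a n|) ↔
      EquidistributedMod1 (fun n => Real.logb b |r n|) := by
  have hd := tendsto_logb_abs_sub_logb_abs b h
  rw [← equidistributedMod1_comp_succ_iff]
  exact ⟨fun ha => ha.of_tendsto_sub (by simpa using hd.neg), fun hr => hr.of_tendsto_sub hd⟩

theorem exists_eventually_abs_le_of_eq_mul_one_add {ρ c : ℕ → ℝ} (hρ : Tendsto ρ atTop (𝓝 0))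
    (hc : ∀ᶠ n in atTop, c (n + 1) = ρ (n + 1) * (1 + c n)) :
    ∃ B, ∀ᶠ n in atTop, |c n| ≤ B := by
  have hsmall : ∀ᶠ n in atTop, |ρ n| ≤ 1 / 2 := by
    simpa using hρ.norm.eventually (ge_mem_nhds (by norm_num : ‖(0 : ℝ)‖ < 1 / 2))
  obtain ⟨N, hN⟩ := eventually_atTop.1 (hc.and ((tendsto_add_atTop_nat 1).eventually hsmall))
  refine ⟨max |c N| 1, eventually_atTop.2 ⟨N, fun n hn => ?_⟩⟩
  induction n, hn using Nat.le_induction with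
  | base => exact le_max_left _ _
  | succ n hn ih =>
    rw [(hN n hn).1, abs_mul]
    calc |ρ (n + 1)| * |1 + c n| ≤ 1 / 2 * (1 + max |c N| 1) :=
          mul_le_mul (hN n hn).2 ((abs_add_le 1 (c n)).trans (by rw [abs_one]; linarith))
            (abs_nonneg _) (by norm_num)
      _ ≤ max |c N| 1 := by linarith [le_max_right |c N| 1]

theorem tendsto_zero_of_eq_mul_one_add {ρ c : ℕ → ℝ} (hρ : Tendsto ρ atTop (𝓝 0))
    (hc : ∀ᶠ n in atTop, c (n + 1) = ρ (n + 1) * (1 + c n)) : Tendsto c atTop (𝓝 0) := by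
  obtain ⟨B, hB⟩ := exists_eventually_abs_le_of_eq_mul_one_add hρ hc
  rw [← tendsto_add_atTop_iff_nat 1]
  have hlim : Tendsto (fun n => |ρ (n + 1)| * (1 + B)) atTop (𝓝 0) := by
    simpa using ((tendsto_add_atTop_iff_nat 1).2 hρ).abs.mul_const (1 + B)
  refine squeeze_zero_norm' ?_ hlim
  filter_upwards [hc, hB] with n hcn hBn
  rw [hcn, Real.norm_eq_abs, abs_mul]
  gcongr
  exact (abs_add_le 1 (c n)).trans (by rw [abs_one]; linarith)

theorem sub_mul_eq_mul_prod_of_recurrence {l μ a : ℕ → ℝ}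
    (hrec : ∀ n ≥ 2, a (n + 1) = (l n + μ n) * a n - l (n - 1) * μ n * a (n - 1))
    {n : ℕ} (hn : 1 ≤ n) :
    a (n + 1) - l n * a n = (a 2 - l 1 * a 1) * ∏ i ∈ Icc 2 n, μ i := by
  induction n, hn using Nat.le_induction with
  | base => simp
  | succ n hn ih =>
    rw [prod_Icc_succ_top (by omega), ← mul_assoc, ← ih, hrec (n + 1) (by omega),
      Nat.add_sub_cancel]
    ring

theorem tendsto_succ_div_of_eq_mul_add {l μ a r : ℕ → ℝ}
    (hp : Tendsto (fun n => l n / μ n) atTop (𝓝 0)) (hμ : ∀ n ≥ 2, μ n ≠ 0) (hr : ∀ n, r n ≠ 0)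
    (hr_succ : ∀ n ≥ 1, r (n + 1) = μ (n + 1) * r n)
    (ha_succ : ∀ n ≥ 1, a (n + 1) = l n * a n + r n) :
    Tendsto (fun n => a (n + 1) / r n) atTop (𝓝 1) := by
  set c : ℕ → ℝ := fun n => l n * a n / r n
  have hc : ∀ᶠ n in atTop, c (n + 1) = l (n + 1) / μ (n + 1) * (1 + c n) := by
    filter_upwards [eventually_ge_atTop 1] with n hn
    simp only [c]
    rw [ha_succ n hn, hr_succ n hn]
    field_simp [hr n, hμ (n + 1) (by omega)]
    ring
  have hlim := (tendsto_zero_of_eq_mul_one_add hp hc).const_add 1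
  rw [add_zero] at hlim
  refine hlim.congr' ?_
  filter_upwards [eventually_ge_atTop 1] with n hn
  simp only [c]
  rw [ha_succ n hn]
  field_simp [hr n]
  ring

/-- For the recurrence `a (n+1) = f(n) a n + g(n) a (n-1)` with `f = λ + μ`,
`g(n) = -λ(n-1)μ(n)`, `μ` nonvanishing, `λ(n)/μ(n) → 0` and `b₁ = a₂ - λ(1)a₁ ≠ 0`:
`(a n)` is Benford base 10 iff the main term `r n = b₁ ∏_{i=2}^n μ(i)` is Benford base 10. -/
theorem benford_iff_main_term_benford (l μ : ℕ → ℝ)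
    (hμ : ∀ n : ℕ, 2 ≤ n → μ n ≠ 0)
    (hp : Tendsto (fun n : ℕ => l n / μ n) atTop (nhds 0))
    (f g : ℕ → ℝ) (hf : ∀ n, f n = l n + μ n)
    (hg : ∀ n : ℕ, 2 ≤ n → g n = -(l (n - 1) * μ n))
    (a : ℕ → ℝ)
    (hrec : ∀ n : ℕ, 2 ≤ n → a (n + 1) = f n * a n + g n * a (n - 1))
    (hb : a 2 - l 1 * a 1 ≠ 0)
    (r : ℕ → ℝ) (hr : ∀ n : ℕ, r n = (a 2 - l 1 * a 1) * ∏ i ∈ Finset.Icc 2 n, μ i) :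
    EquidistributedMod1 (fun n => Real.logb 10 |a n|) ↔
      EquidistributedMod1 (fun n => Real.logb 10 |r n|) := by
  have hr_ne : ∀ n, r n ≠ 0 := fun n => by
    rw [hr]
    exact mul_ne_zero hb (prod_ne_zero_iff.2 fun i hi => hμ i (mem_Icc.1 hi).1)
  have hr_succ : ∀ n ≥ 1, r (n + 1) = μ (n + 1) * r n := fun n hn => by
    rw [hr, hr, prod_Icc_succ_top (by omega)]
    ring
  have hrec' : ∀ n ≥ 2, a (n + 1) = (l n + μ n) * a n - l (n - 1) * μ n * a (n - 1) :=
    fun n hn => by rw [hrec n hn, hf, hg n hn]; ring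
  have ha_succ : ∀ n ≥ 1, a (n + 1) = l n * a n + r n := fun n hn => by
    rw [hr, ← sub_mul_eq_mul_prod_of_recurrence hrec' hn]
    ring
  exact equidistributedMod1_logb_abs_iff_of_tendsto_div 10
    (tendsto_succ_div_of_eq_mul_add hp hμ hr_ne hr_succ ha_succ)
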